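/- arXiv:1208.1920 — 8 statements merged into one kernel-verified Lean document; each statement's English description precedes it below -/
import Mathlib

section
/- For any odd prime p and any m ∈ ℤ/pℤ, the number of pairs (x, y) ∈ (ℤ/pℤ) × (ℤ/pℤ) satisfying x + y = m, y ≠ p - 1, and y ≥ x (comparing canonical representatives in {0, ..., p-1}) is exactly (p - 1)/2. -/
/-!
Among the `p` solutions of `x + y = m`, the swap `(x, y) ↦ (y, x)` exchanges those with
`x ≤ y` and those with `y ≤ x`; the two families overlap only on the diagonal, which holds the
single solution `x = y = m / 2` because `p` is odd. Hence `p + 1` solutions have `x ≤ y`,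
and the condition `y ≠ -1` removes exactly one of them, namely `(m + 1, -1)`.
-/

open Finset Function

theorem Finset.two_mul_card_filter_le_of_swap_mem {α β : Type*} [DecidableEq α] [LinearOrder β]
    {f : α → β} (hf : Injective f) {s : Finset (α × α)} (hs : ∀ xy ∈ s, xy.swap ∈ s) :
    2 * #{xy ∈ s | f xy.1 ≤ f xy.2} = #s + #{xy ∈ s | xy.1 = xy.2} := by
  have hswap : #{xy ∈ s | f xy.2 ≤ f xy.1} = #{xy ∈ s | f xy.1 ≤ f xy.2} :=
    card_nbij' Prod.swap Prod.swap
      (fun xy h => by simp only [coe_filter, Set.mem_ofPred_eq] at h ⊢; exact ⟨hs _ h.1, h.2⟩)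
      (fun xy h => by simp only [coe_filter, Set.mem_ofPred_eq] at h ⊢; exact ⟨hs _ h.1, h.2⟩)
      (fun _ _ => rfl) (fun _ _ => rfl)
  have hunion : {xy ∈ s | f xy.1 ≤ f xy.2} ∪ {xy ∈ s | f xy.2 ≤ f xy.1} = s := by
    rw [← filter_or, filter_true_of_mem fun xy _ => le_total _ _]
  have hinter : {xy ∈ s | f xy.1 ≤ f xy.2} ∩ {xy ∈ s | f xy.2 ≤ f xy.1} =
      {xy ∈ s | xy.1 = xy.2} := by
    rw [← filter_and]
    exact filter_congr fun xy _ => ⟨fun h => hf (h.1.antisymm h.2), fun h => by simp [h]⟩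
  have := card_union_add_card_inter {xy ∈ s | f xy.1 ≤ f xy.2} {xy ∈ s | f xy.2 ≤ f xy.1}
  rw [hunion, hinter, hswap] at this
  omega

theorem card_filter_add_eq {G : Type*} [AddGroup G] [Fintype G] [DecidableEq G] (m : G) :
    #{xy : G × G | xy.1 + xy.2 = m} = Fintype.card G := by
  rw [← card_univ]
  exact card_nbij' Prod.fst (fun x => (x, -x + m)) (fun _ _ => mem_coe.2 (mem_univ _))
    (fun x _ => by simp)
    (fun xy h => by
      simp only [coe_filter, mem_univ, true_and, Set.mem_ofPred_eq] at h ⊢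
      rw [← h, neg_add_cancel_left])
    (fun _ _ => rfl)

theorem existsUnique_add_self_eq_of_odd_card {G : Type*} [AddGroup G] (hG : Odd (Nat.card G))
    (m : G) : ∃! x : G, x + x = m := by
  simpa only [nsmulCoprime_apply, two_nsmul] using
    (nsmulCoprime (Nat.coprime_two_right.2 hG)).bijective.existsUnique m

theorem two_mul_card_filter_add_eq_and_le {G β : Type*} [AddCommGroup G] [Fintype G]
    [DecidableEq G] [LinearOrder β] {f : G → β} (hf : Injective f) (hG : Odd (Fintype.card G))
    (m : G) : 2 * #{xy : G × G | xy.1 + xy.2 = m ∧ f xy.1 ≤ f xy.2} = Fintype.card G + 1 := by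
  have hdiag : #{xy ∈ {xy : G × G | xy.1 + xy.2 = m} | xy.1 = xy.2} = 1 := by
    obtain ⟨c, hc, hc_unique⟩ :=
      existsUnique_add_self_eq_of_odd_card (by rwa [Nat.card_eq_fintype_card]) m
    refine card_eq_one.2 ⟨(c, c), ?_⟩
    ext ⟨x, y⟩
    simp only [mem_filter, mem_univ, true_and, mem_singleton, Prod.mk.injEq]
    constructor
    · rintro ⟨hxy, rfl⟩
      exact ⟨hc_unique x hxy, hc_unique x hxy⟩
    · rintro ⟨rfl, rfl⟩
      exact ⟨hc, rfl⟩
  rw [← filter_filter, two_mul_card_filter_le_of_swap_mem hf, card_filter_add_eq, hdiag]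
  intro xy hxy
  simpa [add_comm] using hxy

theorem ZMod.val_neg_one_eq_sub_one {n : ℕ} [NeZero n] : (-1 : ZMod n).val = n - 1 := by
  obtain ⟨k, rfl⟩ := Nat.exists_eq_succ_of_ne_zero (NeZero.ne n)
  exact ZMod.val_neg_one k

theorem ZMod.val_lt_sub_one_iff_ne_neg_one {n : ℕ} [NeZero n] {y : ZMod n} :
    y.val < n - 1 ↔ y ≠ -1 := by
  rw [Ne, ← (ZMod.val_injective n).eq_iff, ZMod.val_neg_one_eq_sub_one]
  have := ZMod.val_lt y
  omega

theorem ZMod.card_filter_add_eq_and_val_lt_and_val_le {n : ℕ} [NeZero n] (hn : Odd n)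
    (m : ZMod n) :
    #{xy : ZMod n × ZMod n | xy.1 + xy.2 = m ∧ xy.2.val < n - 1 ∧ xy.1.val ≤ xy.2.val} =
      (n - 1) / 2 := by
  set T : Finset (ZMod n × ZMod n) := {xy | xy.1 + xy.2 = m ∧ xy.1.val ≤ xy.2.val}
  have hT : 2 * #T = n + 1 := by
    simpa only [ZMod.card] using
      two_mul_card_filter_add_eq_and_le (ZMod.val_injective n) (by rwa [ZMod.card]) m
  have hmem : (m + 1, -1) ∈ T := by
    simp only [T, mem_filter, mem_univ, true_and, add_neg_cancel_right,
      ZMod.val_neg_one_eq_sub_one]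
    have := ZMod.val_lt (m + 1)
    omega
  have herase : ({xy : ZMod n × ZMod n | xy.1 + xy.2 = m ∧ xy.2.val < n - 1 ∧
      xy.1.val ≤ xy.2.val} : Finset _) = T.erase (m + 1, -1) := by
    ext ⟨x, y⟩
    simp only [T, mem_filter, mem_univ, true_and, mem_erase, Ne, Prod.mk.injEq,
      ZMod.val_lt_sub_one_iff_ne_neg_one]
    constructor
    · rintro ⟨hxy, hy, hle⟩
      exact ⟨fun h => hy h.2, hxy, hle⟩
    · rintro ⟨hne, hxy, hle⟩
      refine ⟨hxy, fun hy => hne ⟨?_, hy⟩, hle⟩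
      rw [← hxy, hy, neg_add_cancel_right]
  rw [herase, card_erase_of_mem hmem]
  omega

theorem stmt_1 (p : ℕ) (hp : p.Prime) (hodd : p ≠ 2) [NeZero p] (m : ZMod p) :
    (Finset.univ.filter
      (fun xy : ZMod p × ZMod p =>
        xy.1 + xy.2 = m ∧ xy.2.val < p - 1 ∧ xy.1.val ≤ xy.2.val)).card = (p - 1) / 2 :=
  ZMod.card_filter_add_eq_and_val_lt_and_val_le (hp.odd_of_ne_two hodd) m
end

section
/- For any odd prime p and any m ∈ ℤ/pℤ, the number of pairs (x, y) ∈ (ℤ/pℤ) × (ℤ/pℤ) satisfying x + y = m, y ≠ p - 1, and y < x (comparing canonical representatives) is exactly (p - 1)/2. -/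
/-!
Projecting to the second coordinate, the pairs are the `y` with `y.val < (m - y).val` (the
condition `y.val < p - 1` is then automatic). The involution `y ↦ m - y` swaps these with the
`y` satisfying `(m - y).val < y.val`, and since `2` is invertible it has exactly one fixed point,
`y = m / 2`; so the remaining `p - 1` elements split evenly.
-/

open Finset Function

theorem Function.Involutive.two_mul_card_filter_lt_add_card_fixed {α β : Type*} [Fintype α]
    [DecidableEq α] [LinearOrder β] {σ : α → α} (hσ : Involutive σ) {f : α → β}
    (hf : Injective f) :
    2 * #{a | f a < f (σ a)} + #{a | σ a = a} = Fintype.card α := by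
  have hswap : #{a | f a < f (σ a)} = #{a | f (σ a) < f a} :=
    card_nbij' σ σ (fun a ha => by simpa [hσ a] using ha) (fun a ha => by simpa [hσ a] using ha)
      (fun a _ => hσ a) (fun a _ => hσ a)
  have hnot : #{a | ¬f a < f (σ a)} = #{a | f (σ a) < f a} + #{a | σ a = a} := by
    rw [← card_union_of_disjoint (disjoint_filter.2 fun a _ h h' => by simp [h'] at h)]
    congr 1
    ext a
    simp only [mem_filter, mem_univ, true_and, mem_union, not_lt, le_iff_lt_or_eq, hf.eq_iff]
  rw [← card_univ, ← card_filter_add_card_filter_not (s := univ) (fun a => f a < f (σ a)), hnot,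
    ← hswap]
  ring

theorem sub_eq_self_iff_eq_inv_two_mul {R : Type*} [CommRing R] (h2 : IsUnit (2 : R)) {m y : R} :
    m - y = y ↔ y = ↑h2.unit⁻¹ * m := by
  rw [sub_eq_iff_eq_add, ← two_mul, Units.eq_inv_mul_iff_mul_eq, IsUnit.unit_spec, eq_comm]

theorem ZMod.two_mul_card_filter_val_lt_val_sub_add_one {n : ℕ} [NeZero n] (hn : Odd n)
    (m : ZMod n) :
    2 * #{y : ZMod n | y.val < (m - y).val} + 1 = n := by
  have h2 : IsUnit (2 : ZMod n) := by
    exact_mod_cast (ZMod.isUnit_iff_coprime 2 n).2 (Nat.coprime_two_left.2 hn)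
  have hfix : #{y : ZMod n | m - y = y} = 1 := by
    simp_rw [sub_eq_self_iff_eq_inv_two_mul h2, filter_eq', mem_univ, if_true, card_singleton]
  rw [← hfix]
  exact (Involutive.two_mul_card_filter_lt_add_card_fixed (σ := (m - ·)) (sub_sub_cancel m)
    (ZMod.val_injective n)).trans (ZMod.card n)

theorem ZMod.card_filter_add_eq_val_snd_lt_val_fst {n : ℕ} [NeZero n] (m : ZMod n) :
    #{xy : ZMod n × ZMod n | xy.1 + xy.2 = m ∧ xy.2.val < n - 1 ∧ xy.2.val < xy.1.val} =
      #{y : ZMod n | y.val < (m - y).val} := by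
  have hx : ∀ x y : ZMod n, x + y = m → x = m - y := fun x y h => eq_sub_of_add_eq h
  refine card_nbij' Prod.snd (fun y => (m - y, y)) ?_ ?_ ?_ (fun _ _ => rfl)
  · rintro ⟨x, y⟩ h
    simp only [coe_filter, mem_univ, true_and, Set.mem_ofPred_eq] at h ⊢
    simpa [hx x y h.1] using h.2.2
  · intro y hy
    simp only [coe_filter, mem_univ, true_and, Set.mem_ofPred_eq, sub_add_cancel] at hy ⊢
    have := (m - y).val_lt
    omega
  · rintro ⟨x, y⟩ h
    simp only [coe_filter, mem_univ, true_and, Set.mem_ofPred_eq] at h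
    simp [hx x y h.1]

theorem stmt_2 (p : ℕ) (hp : p.Prime) (hodd : p ≠ 2) [NeZero p] (m : ZMod p) :
    (Finset.univ.filter
      (fun xy : ZMod p × ZMod p =>
        xy.1 + xy.2 = m ∧ xy.2.val < p - 1 ∧ xy.2.val < xy.1.val)).card = (p - 1) / 2 := by
  have hcount := ZMod.two_mul_card_filter_val_lt_val_sub_add_one (hp.odd_of_ne_two hodd) m
  rw [ZMod.card_filter_add_eq_val_snd_lt_val_fst]
  omega
end

section
/- In a GBTD(k, m), the deficient k-tuples of the m rows partition the km-element point set: every point is deficient for exactly one row, and each row has exactly k deficient points. -/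
/-- A GBTD(k, m): a `(km, k, k−1)`-BIBD whose `m(km−1)` blocks are arranged into an
`m × (km−1)` array such that every point occurs exactly once in each column and in at
most `k` cells of each row. The array is given as `A : Fin m → Fin (k*m-1) → Finset (Fin (k*m))`. -/
structure IsGBTD (k m : ℕ) (A : Fin m → Fin (k * m - 1) → Finset (Fin (k * m))) : Prop where
  block_size : ∀ i j, (A i j).card = k
  pair_balanced : ∀ x y : Fin (k * m), x ≠ y →
    (Finset.univ.filter
      (fun ij : Fin m × Fin (k * m - 1) => x ∈ A ij.1 ij.2 ∧ y ∈ A ij.1 ij.2)).card = k - 1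
  col_once : ∀ (x : Fin (k * m)) (j : Fin (k * m - 1)),
    (Finset.univ.filter (fun i : Fin m => x ∈ A i j)).card = 1
  row_le : ∀ (x : Fin (k * m)) (i : Fin m),
    (Finset.univ.filter (fun j : Fin (k * m - 1) => x ∈ A i j)).card ≤ k

/-- The number of blocks of row `i` of the array containing the point `x`. -/
def rowCount (k m : ℕ) (A : Fin m → Fin (k * m - 1) → Finset (Fin (k * m)))
    (x : Fin (k * m)) (i : Fin m) : ℕ :=
  (Finset.univ.filter (fun j : Fin (k * m - 1) => x ∈ A i j)).card

/-
Write `k - rowCount x i` for the deficiency of the point `x` in row `i`; it is a genuine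
difference since `rowCount x i ≤ k`. Each column contains `x` exactly once, so `x` lies in
`km − 1` blocks altogether, and the deficiencies of `x` over the `m` rows add up to
`mk − (km − 1) = 1`: every deficiency is `0` or `1`, and exactly one row has `x` deficient.
Counting the incidences of row `i` by blocks gives `(km − 1)k`, so the deficiencies in row `i`
over the `km` points add up to `k`, and exactly `k` points are deficient for it.
-/

open Finset

theorem Finset.card_filter_eq_one_eq_sum {ι : Type*} (s : Finset ι) (g : ι → ℕ)
    (hg : ∀ i ∈ s, g i ≤ 1) : #(s.filter (g · = 1)) = ∑ i ∈ s, g i := by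
  rw [card_filter]
  refine sum_congr rfl fun i hi => ?_
  have := hg i hi
  split <;> omega

namespace IsGBTD

variable {k m : ℕ} {A : Fin m → Fin (k * m - 1) → Finset (Fin (k * m))}

theorem rowCount_le (hA : IsGBTD k m A) (x : Fin (k * m)) (i : Fin m) :
    rowCount k m A x i ≤ k :=
  hA.row_le x i

theorem sum_rowCount_rows (hA : IsGBTD k m A) (x : Fin (k * m)) :
    ∑ i, rowCount k m A x i = k * m - 1 := by
  simp only [rowCount, card_filter]
  rw [sum_comm]
  simp [hA.col_once x]

theorem sum_rowCount_points (hA : IsGBTD k m A) (i : Fin m) :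
    ∑ x, rowCount k m A x i = (k * m - 1) * k := by
  simp only [rowCount, card_filter]
  rw [sum_comm]
  simp [hA.block_size]

theorem sum_deficiency_rows (hA : IsGBTD k m A) (x : Fin (k * m)) :
    ∑ i, (k - rowCount k m A x i) = 1 := by
  rw [sum_tsub_distrib _ fun i _ => hA.rowCount_le x i, hA.sum_rowCount_rows x,
    sum_const, card_univ, Fintype.card_fin, smul_eq_mul, mul_comm m k]
  have := x.pos
  omega

theorem sum_deficiency_points (hA : IsGBTD k m A) (i : Fin m) :
    ∑ x, (k - rowCount k m A x i) = k := by
  rw [sum_tsub_distrib _ fun x _ => hA.rowCount_le x i, hA.sum_rowCount_points i,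
    sum_const, card_univ, Fintype.card_fin, smul_eq_mul, Nat.sub_one_mul]
  exact Nat.sub_sub_self <|
    (Nat.le_mul_self k).trans (Nat.mul_le_mul_right k (Nat.le_mul_of_pos_right k i.pos))

theorem deficiency_le_one (hA : IsGBTD k m A) (x : Fin (k * m)) (i : Fin m) :
    k - rowCount k m A x i ≤ 1 :=
  hA.sum_deficiency_rows x ▸ single_le_sum (f := fun i => k - rowCount k m A x i)
    (fun _ _ => Nat.zero_le _) (mem_univ i)

theorem rowCount_eq_pred_iff (hA : IsGBTD k m A) (x : Fin (k * m)) (i : Fin m) :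
    rowCount k m A x i = k - 1 ↔ k - rowCount k m A x i = 1 := by
  have hk : 0 < k := Nat.pos_of_mul_pos_right x.pos
  have := hA.rowCount_le x i
  omega

end IsGBTD

/-- In a GBTD(k, m), the deficient k-tuples of the rows partition the point set:
every point is deficient for exactly one row, and each row has exactly `k` deficient points. -/
theorem stmt_7 (k m : ℕ)
    (A : Fin m → Fin (k * m - 1) → Finset (Fin (k * m))) (hA : IsGBTD k m A) :
    (∀ x : Fin (k * m),
      (Finset.univ.filter (fun i : Fin m => rowCount k m A x i = k - 1)).card = 1) ∧
    (∀ i : Fin m,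
      (Finset.univ.filter (fun x : Fin (k * m) => rowCount k m A x i = k - 1)).card = k) := by
  refine ⟨fun x => ?_, fun i => ?_⟩
  · rw [filter_congr fun i _ => hA.rowCount_eq_pred_iff x i,
      card_filter_eq_one_eq_sum _ _ fun i _ => hA.deficiency_le_one x i, hA.sum_deficiency_rows x]
  · rw [filter_congr fun x _ => hA.rowCount_eq_pred_iff x i,
      card_filter_eq_one_eq_sum _ _ fun x _ => hA.deficiency_le_one x i,
      hA.sum_deficiency_points i]
end

section
/- Let p be an odd prime and M_p the matrix over ℤ/pℤ defined by (H*)_i = (ī, i+1̄, ..., i+p−1̄), (H_i, V_j)_l = vector (i(j+1)+jl, i(j+1)+jl+1, ..., i(j+1)+jl+p−1) for j ∈ {0,...,p−2}, and (H_i, V_{p−1})_l = (−l, −l+1, ..., −l+p−1) if l ≥ i, and (−l+1, ..., −l+p) if l < i, where i ∈ ℤ/pℤ and l ∈ {0,...,p−2}. Then every element of ℤ/pℤ occurs exactly p times in each column of M_p. -/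
/-!
A row of `H*` meets the block `V_j` in the constant `i + j`, so it contributes each value once
as `i` runs over `ℤ/pℤ`. For `j ≤ p − 2`, row `l` of the blocks `H_0, …, H_{p−1}` has entry
`(j + 1) i + const` in a fixed column, a bijective function of `i` because `j + 1` is a unit;
this gives `p − 1` more occurrences. In `V_{p−1}` the entry of row `l` of `H_i` is `m − l` if
`i ≤ l` and `m − l + 1` otherwise, so the value `a` occurs `l + 1` times for `l ≡ m − a` and
`p − 1 − l` times for `l ≡ m − a + 1`; summing over `l = 0, …, p − 2` gives `p − 1` in all cases.
-/

/-- The matrix `M_p` of the construction: a `p² × p²` matrix over `ℤ/pℤ`.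
Rows: the first `p` rows form `H*` (indexed by `i ∈ ℤ/pℤ`), the remaining rows are
grouped into blocks `H_i` of `p−1` rows each (indexed by `l ∈ {0,…,p−2}`).
Columns are grouped into blocks `V_j` of `p` columns each (entries of a row within a
block indexed by `mc ∈ {0,…,p−1}`).
`(H*)_i` is the concatenation of the constant vectors `ī, i+1̄, …, i+p−1̄`;
for `j ≤ p−2`, `(H_i, V_j)_l` is the arithmetic vector starting at `i(j+1) + jl`
with common difference 1; `(H_i, V_{p−1})_l` is the arithmetic vector starting at `−l`
if `l ≥ i` and at `−l+1` if `l < i` (comparing canonical representatives). -/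
def Mp (p : ℕ) : Fin (p * p) → Fin (p * p) → ZMod p := fun r c =>
  let j : ℕ := c.val / p      -- column block `V_j`
  let mc : ℕ := c.val % p     -- position within the block
  if r.val < p then
    -- row of `H*` with index `i = r.val`: constant `i + j` on the block `V_j`
    ((r.val + j : ℕ) : ZMod p)
  else
    -- row `l` of block `H_i`
    let i : ℕ := (r.val - p) / (p - 1)
    let l : ℕ := (r.val - p) % (p - 1)
    if j < p - 1 then
      ((i * (j + 1) + j * l + mc : ℕ) : ZMod p)
    else
      (if i ≤ l then -(l : ZMod p) else -(l : ZMod p) + 1) + (mc : ℕ)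

open Finset Function

lemma natCast_eq_iff_eq_val {p l : ℕ} [NeZero p] (hl : l < p) (s : ZMod p) :
    (l : ZMod p) = s ↔ l = s.val := by
  constructor
  · rintro rfl
    exact (ZMod.val_cast_of_lt hl).symm
  · rintro rfl
    exact ZMod.natCast_zmod_val s

lemma card_filter_eq_one_of_bijective {α β : Type*} [Fintype α] [DecidableEq β] {f : α → β}
    (hf : Bijective f) (b : β) : #{x | f x = b} = 1 := by
  obtain ⟨x, hx, hx_uniq⟩ := hf.existsUnique b
  refine card_eq_one.2 ⟨x, ?_⟩
  ext y
  simpa using ⟨hx_uniq y, fun h => h ▸ hx⟩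

lemma bijective_affine_natCast {p : ℕ} [NeZero p] {u : ZMod p} (hu : IsUnit u) (b : ZMod p) :
    Bijective fun i : Fin p => u * ((i : ℕ) : ZMod p) + b := by
  refine (Fintype.bijective_iff_injective_and_card _).2 ⟨?_, by simp⟩
  intro i i' h
  have h' : ((i : ℕ) : ZMod p) = ((i' : ℕ) : ZMod p) := hu.mul_right_injective (add_right_cancel h)
  exact Fin.ext ((natCast_eq_iff_eq_val i.isLt _).1 h' |>.trans (ZMod.val_cast_of_lt i'.isLt))

lemma card_filter_ite_val_le {n l : ℕ} (hl : l < n) (P Q : Prop) [Decidable P] [Decidable Q] :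
    #{i : Fin n | if (i : ℕ) ≤ l then P else Q}
      = (if P then l + 1 else 0) + (if Q then n - (l + 1) else 0) := by
  have h_le : #{i : Fin n | (i : ℕ) ≤ l} = l + 1 := by
    simpa [Nat.lt_succ_iff, hl] using Fin.card_filter_val_lt (n := n) (m := l + 1)
  have h_gt : #{i : Fin n | l < (i : ℕ)} = n - (l + 1) := by
    simp_rw [← not_le]
    rw [filter_not, card_sdiff_of_subset (filter_subset _ _), h_le, card_univ, Fintype.card_fin]
  by_cases hP : P <;> by_cases hQ : Q <;> simp [hP, hQ, h_le, h_gt]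
  omega

lemma sum_fin_ite_natCast_eq {M : Type*} [AddCommMonoid M] {p n : ℕ} [NeZero p] (hn : n ≤ p)
    (s : ZMod p) (g : ℕ → M) :
    ∑ l : Fin n, (if ((l : ℕ) : ZMod p) = s then g l else 0)
      = if s.val < n then g s.val else 0 := by
  rw [Fin.sum_univ_eq_sum_range (fun l => if (l : ZMod p) = s then g l else 0)]
  rw [sum_congr rfl fun l hl => if_congr
    (natCast_eq_iff_eq_val ((mem_range.1 hl).trans_le hn) s) rfl rfl]
  simp [sum_ite_eq']

def rowEquiv (p : ℕ) : Fin p ⊕ Fin p × Fin (p - 1) ≃ Fin (p * p) :=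
  (Equiv.sumCongr (Equiv.refl _) finProdFinEquiv).trans <|
    finSumFinEquiv.trans <| finCongr <| by cases p <;> simp [Nat.mul_succ]; ring

lemma rowEquiv_inl_val (p : ℕ) (i : Fin p) : (rowEquiv p (.inl i) : ℕ) = i := by
  simp [rowEquiv]

lemma rowEquiv_inr_val (p : ℕ) (i : Fin p) (l : Fin (p - 1)) :
    (rowEquiv p (.inr (i, l)) : ℕ) = p + (l + (p - 1) * i) := by
  simp [rowEquiv, finProdFinEquiv_apply_val]

lemma card_filter_eq_rowEquiv {p : ℕ} (P : Fin (p * p) → Prop) [DecidablePred P] :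
    #{r | P r} = #{i | P (rowEquiv p (.inl i))} + ∑ l, #{i | P (rowEquiv p (.inr (i, l)))} := by
  simp only [card_filter]
  rw [← (rowEquiv p).sum_comp, Fintype.sum_sum_type, Fintype.sum_prod_type, sum_comm]

section Entries

variable {p : ℕ} (c : Fin (p * p))

lemma Mp_rowEquiv_inl (i : Fin p) :
    Mp p (rowEquiv p (.inl i)) c = ((i : ℕ) : ZMod p) + (((c : ℕ) / p : ℕ) : ZMod p) := by
  simp [Mp, rowEquiv_inl_val]

lemma Mp_rowEquiv_inr (i : Fin p) (l : Fin (p - 1)) :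
    Mp p (rowEquiv p (.inr (i, l))) c =
      if (c : ℕ) / p < p - 1 then
        (((c : ℕ) / p + 1 : ℕ) : ZMod p) * ((i : ℕ) : ZMod p)
          + (((c : ℕ) / p * l + (c : ℕ) % p : ℕ) : ZMod p)
      else
        (if (i : ℕ) ≤ l then -((l : ℕ) : ZMod p) else -((l : ℕ) : ZMod p) + 1)
          + (((c : ℕ) % p : ℕ) : ZMod p) := by
  have hl := l.isLt
  have h_div : (p + (l + (p - 1) * i) - p) / (p - 1) = i := by
    rw [Nat.add_sub_cancel_left, Nat.add_mul_div_left _ _ (by omega), Nat.div_eq_of_lt hl, zero_add]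
  have h_mod : (p + (l + (p - 1) * i) - p) % (p - 1) = l := by
    rw [Nat.add_sub_cancel_left, Nat.add_mul_mod_self_left, Nat.mod_eq_of_lt hl]
  simp only [Mp, rowEquiv_inr_val, h_div, h_mod, if_neg (Nat.not_lt.2 (Nat.le_add_right _ _))]
  split_ifs <;> push_cast <;> ring

end Entries

lemma sum_ite_natCast_eq_add_ite_natCast_eq_add_one {p : ℕ} [NeZero p] (t : ZMod p) :
    ∑ l : Fin (p - 1), ((if ((l : ℕ) : ZMod p) = t then (l : ℕ) + 1 else 0)
      + (if ((l : ℕ) : ZMod p) = t + 1 then p - ((l : ℕ) + 1) else 0)) = p - 1 := by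
  rw [sum_add_distrib, sum_fin_ite_natCast_eq (Nat.sub_le p 1) t (· + 1),
    sum_fin_ite_natCast_eq (Nat.sub_le p 1) (t + 1) (fun v => p - (v + 1)),
    ZMod.val_add, ZMod.val_one_eq_one_mod, Nat.add_mod_mod]
  rcases (show t.val + 1 ≤ p from ZMod.val_lt t).lt_or_eq with h | h
  · rw [Nat.mod_eq_of_lt h]
    split_ifs <;> omega
  · rw [h, Nat.mod_self]
    split_ifs <;> omega

section Counts

variable {p : ℕ} (c : Fin (p * p)) (a : ZMod p)

lemma card_filter_Mp_rowEquiv_inl [NeZero p] : #{i | Mp p (rowEquiv p (.inl i)) c = a} = 1 := by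
  simp_rw [Mp_rowEquiv_inl]
  simpa using card_filter_eq_one_of_bijective (bijective_affine_natCast isUnit_one _) a

lemma card_filter_Mp_rowEquiv_inr_of_lt [Fact p.Prime] (hj : (c : ℕ) / p < p - 1)
    (l : Fin (p - 1)) :
    #{i | Mp p (rowEquiv p (.inr (i, l))) c = a} = 1 := by
  have hu : IsUnit (((c : ℕ) / p + 1 : ℕ) : ZMod p) := by
    refine isUnit_iff_ne_zero.2 fun h => ?_
    rw [ZMod.natCast_eq_zero_iff] at h
    exact Nat.not_dvd_of_pos_of_lt (Nat.succ_pos _) (Nat.add_lt_of_lt_sub hj) h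
  simp_rw [Mp_rowEquiv_inr, if_pos hj]
  exact card_filter_eq_one_of_bijective (bijective_affine_natCast hu _) a

lemma card_filter_Mp_rowEquiv_inr_of_not_lt (hj : ¬ (c : ℕ) / p < p - 1) (l : Fin (p - 1)) :
    #{i | Mp p (rowEquiv p (.inr (i, l))) c = a}
      = (if ((l : ℕ) : ZMod p) = ((c : ℕ) % p : ℕ) - a then (l : ℕ) + 1 else 0)
        + (if ((l : ℕ) : ZMod p) = ((c : ℕ) % p : ℕ) - a + 1 then p - ((l : ℕ) + 1) else 0) := by
  rw [← card_filter_ite_val_le (Nat.lt_of_lt_of_le l.isLt (Nat.sub_le p 1))]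
  refine congrArg card (filter_congr fun i _ => ?_)
  rw [Mp_rowEquiv_inr, if_neg hj]
  split_ifs <;> constructor <;> intro h <;> linear_combination -h

end Counts

theorem stmt_10_general (p : ℕ) (hp : p.Prime) :
    ∀ (c : Fin (p * p)) (a : ZMod p),
      (Finset.univ.filter (fun r : Fin (p * p) => Mp p r c = a)).card = p := by
  intro c a
  have := Fact.mk hp
  suffices ∑ l : Fin (p - 1), #{i | Mp p (rowEquiv p (.inr (i, l))) c = a} = p - 1 by
    rw [card_filter_eq_rowEquiv, card_filter_Mp_rowEquiv_inl, this]
    have := hp.one_lt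
    omega
  by_cases hj : (c : ℕ) / p < p - 1
  · simp [card_filter_Mp_rowEquiv_inr_of_lt c a hj]
  · simp only [card_filter_Mp_rowEquiv_inr_of_not_lt c a hj,
      sum_ite_natCast_eq_add_ite_natCast_eq_add_one]

/-- Every element of `ℤ/pℤ` occurs exactly `p` times in each column of `M_p`. -/
theorem stmt_10 (p : ℕ) (hp : p.Prime) (hodd : p ≠ 2) [NeZero p] :
    ∀ (c : Fin (p * p)) (a : ZMod p),
      (Finset.univ.filter (fun r : Fin (p * p) => Mp p r c = a)).card = p :=
  stmt_10_general p hp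
end

section
/- Let p be an odd prime and M_p the matrix defined as in the construction (with (H*)_i = (ī, ..., i+p−1̄), (H_i,V_j)_l starting at i(j+1)+jl for j ≤ p−2, and (H_i,V_{p−1})_l starting at −l if l ≥ i and −l+1 if l < i). Then for each j ∈ ℤ/pℤ, any two distinct columns within the same column-block V_j agree in exactly p rows, all of which lie among the first p rows (i.e., in H*). -/
section

variable {p : ℕ} {r c₁ c₂ : Fin (p * p)}

theorem Mp_eq_of_val_lt (hr : r.val < p) (hblock : c₁.val / p = c₂.val / p) :
    Mp p r c₁ = Mp p r c₂ := by
  simp only [Mp, hr, if_true, hblock]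

theorem Mp_ne_of_le_val (hr : p ≤ r.val) (hblock : c₁.val / p = c₂.val / p)
    (hpos : c₁.val % p ≠ c₂.val % p) : Mp p r c₁ ≠ Mp p r c₂ := by
  have hposZ : ((c₁.val % p : ℕ) : ZMod p) ≠ ((c₂.val % p : ℕ) : ZMod p) := by
    rwa [Ne, ZMod.natCast_eq_natCast_iff', Nat.mod_mod, Nat.mod_mod]
  simp only [Mp, hblock, not_lt.mpr hr, if_false]
  split_ifs <;> push_cast <;> exact fun h => hposZ (add_left_cancel h)

theorem Mp_eq_iff_val_lt (hne : c₁ ≠ c₂) (hblock : c₁.val / p = c₂.val / p) :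
    Mp p r c₁ = Mp p r c₂ ↔ r.val < p := by
  have hpos : c₁.val % p ≠ c₂.val % p := fun h => hne (Fin.ext (Nat.ext_div_mod hblock h))
  refine ⟨fun h => ?_, fun hr => Mp_eq_of_val_lt hr hblock⟩
  by_contra hr
  exact Mp_ne_of_le_val (not_lt.mp hr) hblock hpos h

end

theorem stmt_11_general (p : ℕ) :
    ∀ c₁ c₂ : Fin (p * p), c₁ ≠ c₂ → c₁.val / p = c₂.val / p →
      (Finset.univ.filter (fun r : Fin (p * p) => Mp p r c₁ = Mp p r c₂)).card = p ∧
      (∀ r : Fin (p * p), Mp p r c₁ = Mp p r c₂ → r.val < p) := by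
  intro c₁ c₂ hne hblock
  have hagree : ∀ r : Fin (p * p), Mp p r c₁ = Mp p r c₂ ↔ r.val < p :=
    fun r => Mp_eq_iff_val_lt hne hblock
  refine ⟨?_, fun r => (hagree r).mp⟩
  rw [Finset.filter_congr fun r _ => hagree r, Fin.card_filter_val_lt]
  exact min_eq_right (Nat.le_mul_self p)

/-- Any two distinct columns of `M_p` lying in the same column block `V_j` agree in
exactly `p` rows, and all of these rows lie among the first `p` rows (i.e. in `H*`). -/
theorem stmt_11 (p : ℕ) (hp : p.Prime) (hodd : p ≠ 2) [NeZero p] :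
    ∀ c₁ c₂ : Fin (p * p), c₁ ≠ c₂ → c₁.val / p = c₂.val / p →
      (Finset.univ.filter (fun r : Fin (p * p) => Mp p r c₁ = Mp p r c₂)).card = p ∧
      (∀ r : Fin (p * p), Mp p r c₁ = Mp p r c₂ → r.val < p) :=
  stmt_11_general p
end

section
/- Let p be an odd prime, j₁ ∈ {0, ..., p−2}, and m, n ∈ ℤ/pℤ. Then the number of pairs (i, l) with i ∈ ℤ/pℤ, l ∈ {0, ..., p−2}, satisfying either [i(j₁+1) + j₁·l + m = −l + n and l ≥ i] or [i(j₁+1) + j₁·l + m = −l + 1 + n and l < i] (in ℤ/pℤ, comparing l and i via canonical representatives) is exactly p − 1. -/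
/-!
Since `j₁ + 1` is a unit mod `p`, each equation fixes `i = c - l` for a constant `c` that depends
only on `m`, `n`, `j₁` and on which equation it is. So the count is
`#{l | (c - l).val ≤ l} + #{l | l < (c' - l).val}`. On all of `ℤ/pℤ`, the involution `x ↦ c - x`
exchanges `{x | (c - x).val ≤ x.val}` and `{x | x.val ≤ (c - x).val}`. These two sets cover
`ℤ/pℤ` and meet only in the point `c / 2`, so each has `(p + 1) / 2` elements. Leaving out
`l = p - 1`, which always satisfies the condition, leaves `(p - 1) / 2` values of `l` with
`(c - l).val ≤ l`, and likewise `(p - 1) / 2` with `l < (c' - l).val`.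
-/

open Finset

theorem Finset.card_filter_fst_eq_and {α β : Type*} [Fintype α] [Fintype β] [DecidableEq α]
    (f : β → α) (Q : α → β → Prop) [∀ a b, Decidable (Q a b)] :
    #{x : α × β | x.1 = f x.2 ∧ Q x.1 x.2} = #{b : β | Q (f b) b} := by
  refine card_nbij' Prod.snd (fun b => (f b, b)) ?_ ?_ ?_ ?_ <;> intro x <;>
    simp +contextual [Prod.ext_iff]

theorem mul_add_one_add_mul_add_eq_neg_add_iff {K : Type*} [Field K] {j : K} (hj : j + 1 ≠ 0)
    (i l m n : K) : i * (j + 1) + j * l + m = -l + n ↔ i = (n - m) / (j + 1) - l := by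
  rw [eq_sub_iff_add_eq, eq_div_iff hj]
  constructor <;> intro h <;> linear_combination h

namespace ZMod

variable {p : ℕ} [NeZero p]

theorem card_filter_val_sub_le_val (hp : Odd p) (c : ZMod p) :
    #{x : ZMod p | (c - x).val ≤ x.val} = (p + 1) / 2 := by
  set S : Finset (ZMod p) := {x | (c - x).val ≤ x.val}
  set T : Finset (ZMod p) := {x | x.val ≤ (c - x).val}
  have h2 : IsUnit (2 : ZMod p) := by
    exact_mod_cast (isUnit_iff_coprime 2 p).2 (Nat.coprime_two_left.2 hp)
  have hTS : #T = #S := by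
    refine card_nbij' (c - ·) (c - ·) ?_ ?_ ?_ ?_ <;> intro x <;> simp [S, T]
  have hunion : S ∪ T = univ := by
    ext x; simpa [S, T] using le_total _ _
  have hinter : S ∩ T = {↑h2.unit⁻¹ * c} := by
    ext x
    simp only [S, T, ← filter_and, mem_filter, mem_univ, true_and, ← le_antisymm_iff,
      (val_injective p).eq_iff, mem_singleton]
    rw [sub_eq_iff_eq_add, ← two_mul, eq_comm (a := x), Units.inv_mul_eq_iff_eq_mul,
      IsUnit.unit_spec]
  have hcard := card_union_add_card_inter S T
  rw [hunion, hinter, hTS, card_univ, card, card_singleton] at hcard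
  omega

theorem card_filter_fin_val_sub_le_val (hp : Odd p) (c : ZMod p) :
    #{l : Fin (p - 1) | (c - l.val).val ≤ l.val} = (p - 1) / 2 := by
  set S : Finset (ZMod p) := {x | (c - x).val ≤ x.val}
  set last : ZMod p := ((p - 1 : ℕ) : ZMod p)
  have hlast : last.val = p - 1 := val_cast_of_lt (by have := NeZero.pos p; omega)
  have hmem : last ∈ S := by
    simpa [S, hlast] using Nat.le_sub_one_of_lt (val_lt (c - last))
  have hval (l : Fin (p - 1)) : ((l : ℕ) : ZMod p).val = l := val_cast_of_lt (by omega)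
  calc #{l : Fin (p - 1) | (c - l.val).val ≤ l.val}
      = #(S.erase last) := by
        refine card_bij (fun l _ => (l.val : ZMod p)) ?_ ?_ ?_
        · intro l hl
          rw [mem_erase, Ne, ← (val_injective p).eq_iff, hval, hlast]
          simp only [S, mem_filter, mem_univ, true_and, hval] at hl ⊢
          exact ⟨l.isLt.ne, hl⟩
        · intro a _ b _ hab
          simpa [Fin.ext_iff, hval] using congrArg val hab
        · intro x hx
          rw [mem_erase, Ne, ← (val_injective p).eq_iff, hlast] at hx
          have hxlt : x.val < p - 1 := by have := val_lt x; omega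
          refine ⟨⟨x.val, hxlt⟩, ?_, natCast_zmod_val x⟩
          simpa [S, natCast_zmod_val] using hx.2
    _ = (p - 1) / 2 := by
        rw [card_erase_of_mem hmem, card_filter_val_sub_le_val hp]
        omega

theorem card_filter_eq_sub_and_val_le_or_eq_sub_and_val_lt (hp : Odd p) (c c' : ZMod p) :
    #{il : ZMod p × Fin (p - 1) | (il.1 = c - il.2.val ∧ il.1.val ≤ il.2.val) ∨
      (il.1 = c' - il.2.val ∧ il.2.val < il.1.val)} = p - 1 := by
  rw [filter_or, card_union_of_disjoint (disjoint_filter.2 fun _ _ h h' => by omega),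
    card_filter_fst_eq_and (fun l : Fin (p - 1) => c - l.val) (fun i l => i.val ≤ l.val),
    card_filter_fst_eq_and (fun l : Fin (p - 1) => c' - l.val) (fun i l => l.val < i.val)]
  have hle := card_filter_fin_val_sub_le_val hp c
  have hcompl := card_filter_add_card_filter_not (s := univ)
    (fun l : Fin (p - 1) => (c' - l.val).val ≤ l.val)
  simp only [not_le, card_univ, Fintype.card_fin, card_filter_fin_val_sub_le_val hp] at hcompl
  obtain ⟨k, rfl⟩ := hp
  omega

end ZMod

/-- For `j₁ ∈ {0, …, p−2}` and `m, n ∈ ℤ/pℤ`, the number of pairs `(i, l)` with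
`i ∈ ℤ/pℤ`, `l ∈ {0, …, p−2}` satisfying either `i(j₁+1) + j₁·l + m = −l + n` with
`l ≥ i`, or `i(j₁+1) + j₁·l + m = −l + 1 + n` with `l < i` (representatives compared),
is exactly `p − 1`. -/
theorem stmt_13 (p : ℕ) (hp : p.Prime) (hodd : p ≠ 2) [NeZero p]
    (j₁ : ℕ) (hj₁ : j₁ ≤ p - 2) (m n : ZMod p) :
    (Finset.univ.filter
      (fun il : ZMod p × Fin (p - 1) =>
        (il.1 * ((j₁ : ZMod p) + 1) + (j₁ : ZMod p) * (il.2.val : ZMod p) + m =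
            -(il.2.val : ZMod p) + n ∧ il.1.val ≤ il.2.val) ∨
        (il.1 * ((j₁ : ZMod p) + 1) + (j₁ : ZMod p) * (il.2.val : ZMod p) + m =
            -(il.2.val : ZMod p) + 1 + n ∧ il.2.val < il.1.val))).card = p - 1 := by
  have : Fact p.Prime := ⟨hp⟩
  have hj : (j₁ : ZMod p) + 1 ≠ 0 := by
    rw [← Nat.cast_succ, Ne, ZMod.natCast_eq_zero_iff]
    exact Nat.not_dvd_of_pos_of_lt j₁.succ_pos (by have := hp.two_le; omega)
  simp only [add_assoc _ (1 : ZMod p) n, mul_add_one_add_mul_add_eq_neg_add_iff hj]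
  exact ZMod.card_filter_eq_sub_and_val_le_or_eq_sub_and_val_lt (hp.odd_of_ne_two hodd) _ _
end

section
/- Let p be an odd prime, j₁ ∈ {0, ..., p−2}, and m, n ∈ ℤ/pℤ. The number of pairs (i, l), i ∈ ℤ/pℤ, l ∈ {0, ..., p−2}, with (i + l)(j₁ + 1) = n − m in ℤ/pℤ and l ≥ i (comparing canonical representatives) is exactly (p−1)/2. -/
/-!
Dividing by `j₁ + 1 ≠ 0` turns the condition into `i + l = c` for a fixed `c ∈ ℤ/pℤ`, so `l`
determines `i = c - l` and we count the `l < p - 1` with `(c - l) mod p ≤ l`. For `l ≤ c` this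
means `2l ≥ c`, for `l > c` it means `2l ≥ c + p`; as `p` is odd, the two resulting intervals have
total length `(p - 1) / 2`.
-/

open Finset

theorem card_filter_add_eq_s14 {G ι : Type*} [AddCommGroup G] [Fintype G] [DecidableEq G] [Fintype ι]
    (f : ι → G) (c : G) (P : G → ι → Prop) [∀ g j, Decidable (P g j)] :
    #{x : G × ι | x.1 + f x.2 = c ∧ P x.1 x.2} = #{j : ι | P (c - f j) j} := by
  refine card_nbij' Prod.snd (fun j => (c - f j, j)) ?_ ?_ ?_ ?_
  · rintro ⟨g, j⟩ hx
    obtain ⟨rfl, hP⟩ : g + f j = c ∧ P g j := by simpa using hx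
    simpa using hP
  · intro j hj
    simp_all
  · rintro ⟨g, j⟩ hx
    obtain ⟨rfl, -⟩ : g + f j = c ∧ P g j := by simpa using hx
    simp
  · intro j _
    rfl

theorem Fin.card_filter_univ_val {n : ℕ} (P : ℕ → Prop) [DecidablePred P] :
    #{i : Fin n | P i} = #{k ∈ range n | P k} := by
  rw [← card_map Fin.valEmbedding, map_filter', Fin.map_valEmbedding_univ]
  congr 1
  ext k
  simp only [mem_filter, mem_Iio, mem_range, and_congr_right_iff]
  exact fun hk => ⟨fun ⟨a, ha, hak⟩ => hak ▸ ha, fun h => ⟨⟨k, hk⟩, h, rfl⟩⟩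

theorem ZMod.val_sub_natCast {p : ℕ} [NeZero p] (c : ZMod p) {l : ℕ} (hl : l ≤ p) :
    (c - l).val = (c.val + p - l) % p := by
  rw [← ZMod.val_natCast, Nat.cast_sub (by omega)]
  simp

theorem Nat.card_filter_range_add_sub_mod_le {p c : ℕ} (hp : Odd p) (hc : c < p) :
    #{l ∈ range (p - 1) | (c + p - l) % p ≤ l} = (p - 1) / 2 := by
  obtain ⟨k, rfl⟩ := hp
  have hsplit : {l ∈ range (2 * k + 1 - 1) | (c + (2 * k + 1) - l) % (2 * k + 1) ≤ l}
      = Ico ((c + 1) / 2) (min (c + 1) (2 * k)) ∪ Ico ((c + 2 * k + 2) / 2) (2 * k) := by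
    ext l
    simp only [mem_filter, mem_range, mem_union, mem_Ico]
    rcases le_or_gt l c with hlc | hcl
    · rw [show c + (2 * k + 1) - l = c - l + (2 * k + 1) by omega, Nat.add_mod_right,
        Nat.mod_eq_of_lt (by omega)]
      omega
    · rw [Nat.mod_eq_of_lt (by omega)]
      omega
  rw [hsplit, card_union_of_disjoint, Nat.card_Ico, Nat.card_Ico]
  · omega
  · exact disjoint_left.mpr fun l h h' => by simp only [mem_Ico] at h h'; omega

theorem ZMod.card_filter_range_val_sub_le {p : ℕ} [NeZero p] (hp : Odd p) (c : ZMod p) :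
    #{l ∈ range (p - 1) | (c - (l : ℕ)).val ≤ l} = (p - 1) / 2 := by
  rw [← Nat.card_filter_range_add_sub_mod_le hp c.val_lt]
  congr 1
  refine filter_congr fun l hl => ?_
  rw [ZMod.val_sub_natCast c (by simp at hl; omega)]

/-- For `j₁ ∈ {0, …, p−2}` and `m, n ∈ ℤ/pℤ`, the number of pairs `(i, l)` with
`i ∈ ℤ/pℤ`, `l ∈ {0, …, p−2}`, `(i + l)(j₁ + 1) = n − m` in `ℤ/pℤ` and `l ≥ i`
(comparing canonical representatives) is exactly `(p−1)/2`. -/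
theorem stmt_14 (p : ℕ) (hp : p.Prime) (hodd : p ≠ 2) [NeZero p]
    (j₁ : ℕ) (hj₁ : j₁ ≤ p - 2) (m n : ZMod p) :
    (Finset.univ.filter
      (fun il : ZMod p × Fin (p - 1) =>
        (il.1 + (il.2.val : ZMod p)) * ((j₁ : ZMod p) + 1) = n - m ∧
          il.1.val ≤ il.2.val)).card = (p - 1) / 2 := by
  have : Fact p.Prime := ⟨hp⟩
  have hunit : (j₁ : ZMod p) + 1 ≠ 0 := by
    rw [← Nat.cast_succ, Ne, ZMod.natCast_eq_zero_iff]
    exact Nat.not_dvd_of_pos_of_lt j₁.succ_pos (by have := hp.two_le; omega)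
  set c := (n - m) * ((j₁ : ZMod p) + 1)⁻¹
  simp_rw [← eq_mul_inv_iff_mul_eq₀ hunit]
  rw [card_filter_add_eq_s14 (fun l : Fin (p - 1) => (l.val : ZMod p)) c (fun i l => i.val ≤ l.val),
    Fin.card_filter_univ_val fun l => (c - l).val ≤ l]
  exact ZMod.card_filter_range_val_sub_le (hp.odd_of_ne_two hodd) c
end

section
/- For every odd prime p, there exists a GBTD(p, p); that is, there exists a (p², p, p−1)-BIBD on p² points whose p(p²−1) blocks can be arranged into a p × (p²−1) array so that every point occurs exactly once in each column and at most p times in each row. -/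
/-!
Take the affine plane `F²` over a finite field `F` of odd order `q` as point set and `F` as
row set. Each column is a map `F² → F`, and its blocks are the fibres: for `a ∈ Fˣ`, `c ∈ F`
the translates `y = r + a (x + c)²` of a parabola, and for `t ∈ Fˣ` the vertical lines
`x = r - t`; this gives `q(q - 1) + (q - 1) = q² - 1` columns of `q` blocks of size `q`.
Two points with the same abscissa share exactly the `q - 1` vertical columns. Two points with
different abscissae share no line, and for each `a` they lie on exactly one common parabola
`y = r + a (x + c)²`: subtracting the two equations leaves a linear equation for `c`, which can
be solved because `2 ≠ 0`. In a fixed row `r` the point `(x, y)` lies on at most one vertical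
line and on exactly `q - 1` parabolas, one for each solution `(a, u) ∈ Fˣ × F` of `a u² = y - r`
(with `u = x + c`).
-/

open Finset

section Fibres

variable {R C X : Type*} [Fintype R] [Fintype C] [DecidableEq R]

lemma card_filter_sum_type {α β : Type*} [Fintype α] [Fintype β] (P : α ⊕ β → Prop)
    [DecidablePred P] : #{s | P s} = #{a | P (.inl a)} + #{b | P (.inr b)} := by
  simp only [card_filter, Fintype.sum_sum_type]

lemma card_filter_prod_eq_and_eq (f : C → X → R) (x y : X) :
    #{rγ : R × C | f rγ.2 x = rγ.1 ∧ f rγ.2 y = rγ.1} = #{γ | f γ x = f γ y} :=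
  card_nbij' Prod.snd (fun γ => (f γ x, γ)) (fun _ => by simp_all) (fun _ => by simp_all)
    (fun _ => by simp_all) (fun _ _ => rfl)

theorem exists_isGBTD_of_fibres [Fintype X] {k m : ℕ} (hR : Fintype.card R = m)
    (hC : Fintype.card C = k * m - 1) (hX : Fintype.card X = k * m) (f : C → X → R)
    (hfibre : ∀ γ r, #{x | f γ x = r} = k)
    (hpair : ∀ x y, x ≠ y → #{γ | f γ x = f γ y} = k - 1)
    (hrow : ∀ x r, #{γ | f γ x = r} ≤ k) :
    ∃ A, IsGBTD k m A := by
  let eR := (Fintype.equivFinOfCardEq hR).symm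
  let eC := (Fintype.equivFinOfCardEq hC).symm
  let eX := (Fintype.equivFinOfCardEq hX).symm
  refine ⟨fun i j => {z | f (eC j) (eX z) = eR i}, ⟨fun i j => ?_, fun z w hzw => ?_,
    fun z j => ?_, fun z i => ?_⟩⟩
  · exact (card_equiv eX (by simp)).trans (hfibre (eC j) (eR i))
  · refine .trans ?_ ((card_filter_prod_eq_and_eq f _ _).trans (hpair _ _ (eX.injective.ne hzw)))
    exact card_equiv (eR.prodCongr eC) (by simp)
  · rw [card_eq_one]
    exact ⟨eR.symm (f (eC j) (eX z)), by ext; simp [eq_comm, Equiv.eq_symm_apply]⟩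
  · exact le_of_eq_of_le (card_equiv eC (by simp)) (hrow (eX z) (eR i))

end Fibres

section Parabolas

variable {F : Type*} [Field F] [Fintype F] [DecidableEq F]

def parabolaRow : (Fˣ × F) ⊕ Fˣ → F × F → F
  | .inl ac, P => P.2 - ac.1 * (P.1 + ac.2) ^ 2
  | .inr t, P => P.1 + t

lemma card_units_prod_sum_units :
    Fintype.card ((Fˣ × F) ⊕ Fˣ) = Fintype.card F * Fintype.card F - 1 := by
  rw [Fintype.card_sum, Fintype.card_prod, Fintype.card_units, Nat.sub_one_mul]
  have := Fintype.card_pos (α := F)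
  have := Nat.le_mul_self (Fintype.card F)
  omega

lemma card_filter_parabolaRow_eq (γ : (Fˣ × F) ⊕ Fˣ) (r : F) :
    #{P | parabolaRow γ P = r} = Fintype.card F := by
  rw [← card_univ]
  rcases γ with ⟨a, c⟩ | t
  · refine card_nbij' Prod.fst (fun x => (x, r + a * (x + c) ^ 2)) ?_ ?_ ?_ ?_ <;>
      simp [Set.MapsTo, Set.LeftInvOn, Set.RightInvOn, parabolaRow, sub_eq_iff_eq_add', add_comm]
  · refine card_nbij' Prod.snd (fun y => (r - t, y)) ?_ ?_ ?_ ?_ <;>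
      simp [Set.MapsTo, Set.LeftInvOn, Set.RightInvOn, parabolaRow, eq_comm, eq_sub_iff_add_eq]

lemma card_filter_units_mul_add_sq_eq (x d : F) :
    #{ac : Fˣ × F | ac.1 * (x + ac.2) ^ 2 = d} = Fintype.card F - 1 := by
  rw [← Fintype.card_units, ← card_univ]
  rcases eq_or_ne d 0 with rfl | hd
  · refine card_nbij' Prod.fst (fun a => (a, -x)) ?_ ?_ ?_ ?_ <;>
      simp [Set.MapsTo, Set.LeftInvOn, Set.RightInvOn, neg_eq_iff_add_eq_zero]
  · have hne : ∀ ac ∈ ({ac | ac.1 * (x + ac.2) ^ 2 = d} : Finset (Fˣ × F)), x + ac.2 ≠ 0 := by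
      rintro ⟨a, c⟩ h h0
      simp_all
    refine card_bij' (fun ac h => Units.mk0 (x + ac.2) (hne ac h))
      (fun u _ => (Units.mk0 d hd * u⁻¹ ^ 2, u - x)) ?_ ?_ ?_ ?_
    · simp
    · intro u _
      simp [mem_filter]
    · rintro ⟨a, c⟩ hac
      have h0 := hne _ hac
      simp only [mem_filter, mem_univ, true_and] at hac
      ext
      · simp [← hac, h0]
      · simp
    · intro u _
      ext
      simp

lemma card_filter_parabolaRow_eq_le (P : F × F) (r : F) :
    #{γ | parabolaRow γ P = r} ≤ Fintype.card F := by
  have hparabola : #{ac : Fˣ × F | parabolaRow (.inl ac) P = r} = Fintype.card F - 1 := by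
    rw [← card_filter_units_mul_add_sq_eq P.1 (P.2 - r)]
    refine congrArg card (filter_congr fun ac _ => ?_)
    rw [parabolaRow]
    constructor <;> intro h <;> linear_combination -h
  have hline : #{t : Fˣ | parabolaRow (.inr t) P = r} ≤ 1 := by
    refine card_le_one.2 fun t ht t' ht' => Units.ext ?_
    rw [mem_filter] at ht ht'
    exact add_left_cancel (ht.2.trans ht'.2.symm)
  rw [card_filter_sum_type, hparabola]
  have := Fintype.card_pos (α := F)
  omega

lemma card_filter_parabolaRow_eq_parabolaRow (h2 : (2 : F) ≠ 0) {P Q : F × F} (hPQ : P ≠ Q) :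
    #{γ | parabolaRow γ P = parabolaRow γ Q} = Fintype.card F - 1 := by
  obtain ⟨x, y⟩ := P
  obtain ⟨x', y'⟩ := Q
  rw [card_filter_sum_type, ← Fintype.card_units, ← card_univ]
  rcases eq_or_ne x x' with rfl | hx
  · have hy : y ≠ y' := fun h => hPQ (h ▸ rfl)
    simp [parabolaRow, hy]
  · have hx' : x - x' ≠ 0 := sub_ne_zero.2 hx
    have hline : #{t : Fˣ | parabolaRow (.inr t) (x, y) = parabolaRow (.inr t) (x', y')} = 0 := by
      simp [parabolaRow, hx]
    -- `y - y' = a (x - x') (x + x' + 2c)` on the common parabola with parameter `a`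
    let c : Fˣ → F := fun a => ((y - y') / (a * (x - x')) - x - x') / 2
    rw [hline, add_zero]
    refine card_nbij' Prod.fst (fun a => (a, c a)) ?_ ?_ ?_ ?_
    · simp [Set.MapsTo]
    · intro a _
      have ha := a.ne_zero
      rw [mem_coe, mem_filter]
      refine ⟨mem_univ _, ?_⟩
      simp only [parabolaRow, c]
      field_simp
      ring
    · rintro ⟨a, b⟩ h
      have ha := a.ne_zero
      rw [mem_coe, mem_filter] at h
      replace h := h.2
      simp only [parabolaRow] at h
      simp only [c, Prod.mk.injEq, true_and]
      field_simp
      linear_combination h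
    · simp [Set.RightInvOn, Set.LeftInvOn]

theorem exists_isGBTD_card_card_of_ringChar_ne_two (hF : ringChar F ≠ 2) :
    ∃ A, IsGBTD (Fintype.card F) (Fintype.card F) A :=
  exists_isGBTD_of_fibres rfl card_units_prod_sum_units (Fintype.card_prod F F) parabolaRow
    card_filter_parabolaRow_eq
    (fun _ _ => card_filter_parabolaRow_eq_parabolaRow (Ring.two_ne_zero hF))
    card_filter_parabolaRow_eq_le

end Parabolas

/-- For every odd prime `p`, there exists a GBTD(p, p). -/
theorem stmt_16 (p : ℕ) (hp : p.Prime) (hodd : p ≠ 2) :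
    ∃ A : Fin p → Fin (p * p - 1) → Finset (Fin (p * p)), IsGBTD p p A := by
  have : Fact p.Prime := ⟨hp⟩
  have h := exists_isGBTD_card_card_of_ringChar_ne_two (F := ZMod p)
    (by rwa [ZMod.ringChar_zmod_n])
  rwa [ZMod.card] at h
end
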